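/- arXiv:1502.02225 — 2 statements merged into one kernel-verified Lean document; each statement's English description precedes it below -/
import Mathlib

section
/- Fix a ∈ (0, 1/2], let λ₂ = 1 − π·a(1−a)/sin(πa) − π·a²(1−a)²/(2·sin(πa)) and β = a(1−a). For λ > 0 define, for r ∈ (0,1), G_λ(r) = 1/2 − log(e^{R(a)/2}/r') + [r²·sin(πa) − 2(1−a)·(E_a(r) − r'²·K_a(r))] / (2λ·r²·r'²·sin(πa)), where r' = √(1−r²). If λ₂ < λ < β, then there exists r₀ ∈ (0,1) such that G_λ is strictly decreasing on (0, r₀) and strictly increasing on (r₀, 1). -/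
/-!
Write `x = r²`, `β = a(1-a)` and `c_n = (a)_n (1-a)_n / (n!)²`. Comparing coefficients gives
`E_a - r'² K_a = (π a / 2) x Φ(x)` with `Φ(x) = Σ c_n xⁿ / (n+1)`, so `G_λ(r) = const + g(r²)` where
`g(x) = log(1-x)/2 + (sin πa - πβ Φ(x)) / (2λ(1-x) sin πa)` and `g'(x) = p(x) / (2λ(1-x)²)`,
`p(x) = 1 - λ(1-x) - (πβ / sin πa) q(x)`, `q = (1-x)Φ' + Φ`.

The series `q` and `q'` have positive coefficients whose partial sums telescope to closed forms in
`N c_N`, and `N c_N → sin(πa)/π` by Euler's sine product. Abel's theorem then gives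
`q(1⁻) = sin(πa)/(πβ)` and `q'(1⁻) = sin(πa)/π`. Hence `p` is strictly concave on `[0,1)`,
`p(0) < 0` (this is `λ > λ₂`), `p(1⁻) = 0` and `p'(1⁻) = λ - β < 0`, so `p` is positive near `1`
and changes sign exactly once; `r₀` is the square root of that point.
-/


open Real Set Filter Topology

/-- The digamma function `ψ(x) = Γ'(x)/Γ(x)`. -/
noncomputable def digamma (x : ℝ) : ℝ := deriv Real.Gamma x / Real.Gamma x

/-- The Ramanujan constant function `R(x) = -2γ - ψ(x) - ψ(1-x)`. -/
noncomputable def ramanujanR (x : ℝ) : ℝ :=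
  -2 * Real.eulerMascheroniConstant - digamma x - digamma (1 - x)

/-- The Riemann zeta function as a real series `ζ(s) = Σ_{n=1}^∞ n^{-s}`. -/
noncomputable def zetaR (s : ℝ) : ℝ := ∑' n : ℕ, 1 / ((n : ℝ) + 1) ^ s

/-- The generalized elliptic integral of the first kind
`K_a(r) = (π/2) Σ_{n=0}^∞ ((a)_n (1-a)_n / (n!)^2) r^(2n)`. -/
noncomputable def Ka (a r : ℝ) : ℝ :=
  Real.pi / 2 * ∑' n : ℕ,
    (Polynomial.eval a (ascPochhammer ℝ n) * Polynomial.eval (1 - a) (ascPochhammer ℝ n)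
      / (Nat.factorial n : ℝ) ^ 2) * r ^ (2 * n)

/-- The generalized elliptic integral of the second kind
`E_a(r) = (π/2) Σ_{n=0}^∞ ((a-1)_n (1-a)_n / (n!)^2) r^(2n)`. -/
noncomputable def Ea (a r : ℝ) : ℝ :=
  Real.pi / 2 * ∑' n : ℕ,
    (Polynomial.eval (a - 1) (ascPochhammer ℝ n) * Polynomial.eval (1 - a) (ascPochhammer ℝ n)
      / (Nat.factorial n : ℝ) ^ 2) * r ^ (2 * n)

def derivCoeff (g : ℕ → ℝ) (n : ℕ) : ℝ := (n + 1) * g (n + 1)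

noncomputable def pseries (g : ℕ → ℝ) (x : ℝ) : ℝ := ∑' n, g n * x ^ n

section PowerSeries

variable {g : ℕ → ℝ} {C x : ℝ}

lemma abs_lt_one_of_mem_Ico (hx : x ∈ Ico (0 : ℝ) 1) : |x| < 1 :=
  abs_lt.mpr ⟨by linarith [hx.1], hx.2⟩

lemma pseries_zero (g : ℕ → ℝ) : pseries g 0 = g 0 := by
  rw [pseries, tsum_eq_single 0 fun n hn => by simp [hn]]
  simp

lemma summable_pseries (hg : ∀ n, |g n| ≤ C) (hx : |x| < 1) :
    Summable fun n => g n * x ^ n := by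
  refine Summable.of_norm_bounded ((summable_geometric_of_lt_one (abs_nonneg x) hx).mul_left C)
    fun n => ?_
  rw [Real.norm_eq_abs, abs_mul, abs_pow]
  exact mul_le_mul_of_nonneg_right (hg n) (by positivity)

lemma summable_natCast_mul_pow_sub_one {ρ : ℝ} (hρ₀ : 0 ≤ ρ) (hρ : ρ < 1) :
    Summable fun n : ℕ => n * ρ ^ (n - 1) := by
  refine (summable_nat_add_iff 1).mp ?_
  have h : Summable fun n : ℕ => (n : ℝ) ^ 1 * ρ ^ n :=
    summable_pow_mul_geometric_of_norm_lt_one 1 (by rwa [Real.norm_eq_abs, abs_of_nonneg hρ₀])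
  refine (h.add (summable_geometric_of_lt_one hρ₀ hρ)).congr fun n => ?_
  simp only [Nat.cast_add, Nat.cast_one, Nat.add_sub_cancel, pow_one]
  ring

lemma hasDerivAt_pseries (hg : ∀ n, |g n| ≤ C) (hx : |x| < 1) :
    HasDerivAt (pseries g) (pseries (derivCoeff g) x) x := by
  obtain ⟨ρ, hxρ, hρ⟩ := exists_between hx
  have hx' : x ∈ Ioo (-ρ) ρ := abs_lt.mp hxρ
  have hbound (n : ℕ) (y : ℝ) (hy : y ∈ Ioo (-ρ) ρ) :
      ‖g n * (n * y ^ (n - 1))‖ ≤ C * (n * ρ ^ (n - 1)) := by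
    rw [Real.norm_eq_abs, abs_mul, abs_mul, abs_pow, Nat.abs_cast]
    gcongr
    · exact (abs_nonneg _).trans (hg 0)
    · exact hg n
    · exact (abs_lt.mpr hy).le
  have hsum := (summable_natCast_mul_pow_sub_one ((abs_nonneg x).trans hxρ.le) hρ).mul_left C
  have hderiv := hasDerivAt_tsum_of_isPreconnected hsum isOpen_Ioo (convex_Ioo _ _).isPreconnected
    (fun n y _ => (hasDerivAt_pow n y).const_mul (g n)) hbound hx' (summable_pseries hg hx) hx'
  refine hderiv.congr_deriv ?_
  rw [(Summable.of_norm_bounded hsum (hbound · x hx')).tsum_eq_zero_add, pseries]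
  simp only [derivCoeff, Nat.cast_zero, zero_mul, mul_zero, zero_add, Nat.add_sub_cancel,
    Nat.cast_succ]
  exact tsum_congr fun n => by ring

lemma strictMonoOn_pseries (hg : ∀ n, |g n| ≤ C) (hg₀ : ∀ n, 0 ≤ g n) (hg₁ : 0 < g 1) :
    StrictMonoOn (pseries g) (Ico 0 1) := by
  intro x hx y hy hxy
  refine Summable.tsum_lt_tsum (i := 1) (fun n => ?_) ?_
    (summable_pseries hg (abs_lt_one_of_mem_Ico hx))
    (summable_pseries hg (abs_lt_one_of_mem_Ico hy))
  · exact mul_le_mul_of_nonneg_left (pow_le_pow_left₀ hx.1 hxy.le n) (hg₀ n)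
  · simpa using mul_lt_mul_of_pos_left hxy hg₁

end PowerSeries

section SignChange

variable {f f' : ℝ → ℝ} {a b l : ℝ}

lemma StrictMonoOn.lt_of_tendsto_nhdsLT (hf : StrictMonoOn f (Ico a b))
    (hlim : Tendsto f (𝓝[<] b) (𝓝 l)) {x : ℝ} (hx : x ∈ Ico a b) : f x < l := by
  have hy : (x + b) / 2 ∈ Ico a b := ⟨by linarith [hx.1, hx.2], by linarith [hx.2]⟩
  refine (hf hx hy (by linarith [hx.2])).trans_le (ge_of_tendsto hlim ?_)
  filter_upwards [Ioo_mem_nhdsLT hy.2] with z hz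
  exact (hf hy ⟨hy.1.trans hz.1.le, hz.2⟩ hz.1).le

lemma StrictAntiOn.lt_of_tendsto_nhdsLT (hf : StrictAntiOn f (Ico a b))
    (hlim : Tendsto f (𝓝[<] b) (𝓝 l)) {x : ℝ} (hx : x ∈ Ico a b) : l < f x :=
  neg_lt_neg_iff.mp <| StrictMonoOn.lt_of_tendsto_nhdsLT
    (fun _ hx _ hy h => neg_lt_neg (hf hx hy h)) hlim.neg hx

lemma strictAntiOn_of_hasDerivAt_neg {D : Set ℝ} (hD : Convex ℝ D)
    (hf : ∀ x ∈ D, HasDerivAt f (f' x) x) (hf' : ∀ x ∈ D, f' x < 0) : StrictAntiOn f D :=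
  strictAntiOn_of_hasDerivWithinAt_neg hD (fun x hx => (hf x hx).continuousAt.continuousWithinAt)
    (fun x hx => (hf x (interior_subset hx)).hasDerivWithinAt)
    fun x hx => hf' x (interior_subset hx)

lemma strictMonoOn_of_hasDerivAt_pos {D : Set ℝ} (hD : Convex ℝ D)
    (hf : ∀ x ∈ D, HasDerivAt f (f' x) x) (hf' : ∀ x ∈ D, 0 < f' x) : StrictMonoOn f D :=
  strictMonoOn_of_hasDerivWithinAt_pos hD (fun x hx => (hf x hx).continuousAt.continuousWithinAt)
    (fun x hx => (hf x (interior_subset hx)).hasDerivWithinAt)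
    fun x hx => hf' x (interior_subset hx)

lemma eventually_pos_nhdsLT_of_hasDerivAt_neg (hf : ∀ᶠ x in 𝓝[<] b, HasDerivAt f (f' x) x)
    (hf' : ∀ᶠ x in 𝓝[<] b, f' x < 0) (hlim : Tendsto f (𝓝[<] b) (𝓝 0)) :
    ∀ᶠ x in 𝓝[<] b, 0 < f x := by
  obtain ⟨u, hub, hu⟩ := mem_nhdsLT_iff_exists_Ioo_subset.mp (hf.and hf')
  filter_upwards [Ioo_mem_nhdsLT hub] with x hx
  have hsub : Ico x b ⊆ Ioo u b := Ico_subset_Ioo_left hx.1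
  have hanti : StrictAntiOn f (Ico x b) := strictAntiOn_of_hasDerivAt_neg (convex_Ico x b)
    (fun y hy => (hu (hsub hy)).1) fun y hy => (hu (hsub hy)).2
  exact hanti.lt_of_tendsto_nhdsLT hlim ⟨le_rfl, hx.2⟩

/-- The zero `c` comes from the intermediate value theorem; strict concavity keeps `f` strictly
above `min (f x) (f y)` between `x` and `y`, which rules out a second sign change. -/
lemma StrictConcaveOn.exists_sign_change (hab : a < b) (hf : StrictConcaveOn ℝ (Ico a b) f)
    (hcont : ContinuousOn f (Ico a b)) (ha : f a < 0) (hpos : ∀ᶠ x in 𝓝[<] b, 0 < f x) :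
    ∃ c ∈ Ioo a b, (∀ x ∈ Ioo a c, f x < 0) ∧ ∀ x ∈ Ioo c b, 0 < f x := by
  obtain ⟨u, hub, hu⟩ := mem_nhdsLT_iff_exists_Ioo_subset.mp hpos
  have hbeyond (x : ℝ) (hx : x < b) : ∃ y ∈ Ioo x b, 0 < f y :=
    ⟨(max x u + b) / 2, ⟨by linarith [le_max_left x u, max_lt hx hub], by linarith [max_lt hx hub]⟩,
      hu ⟨by linarith [le_max_right x u, max_lt hx hub], by linarith [max_lt hx hub]⟩⟩
  obtain ⟨y, hy, hfy⟩ := hbeyond a hab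
  obtain ⟨c, hc, hfc⟩ := intermediate_value_Ioo hy.1.le
    (hcont.mono (Icc_subset_Ico_right hy.2)) ⟨ha, hfy⟩
  have hcb : c < b := hc.2.trans hy.2
  have hmem {x : ℝ} (hx : x ∈ Ioo a b) : x ∈ Ico a b := Ioo_subset_Ico_self hx
  refine ⟨c, ⟨hc.1, hcb⟩, fun x hx => ?_, fun x hx => ?_⟩
  · obtain ⟨z, hz, hfz⟩ := hbeyond c hcb
    by_contra! hfx
    have := hf.lt_on_openSegment (hmem ⟨hx.1, hx.2.trans hcb⟩) (hmem ⟨hc.1.trans hz.1, hz.2⟩)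
      (hx.2.trans hz.1).ne (by rw [openSegment_eq_Ioo (hx.2.trans hz.1)]; exact ⟨hx.2, hz.1⟩)
    rw [hfc] at this
    exact (le_min hfx hfz.le).not_gt this
  · obtain ⟨z, hz, hfz⟩ := hbeyond x hx.2
    have := hf.lt_on_openSegment (hmem ⟨hc.1, hcb⟩) (hmem ⟨hc.1.trans (hx.1.trans hz.1), hz.2⟩)
      (hx.1.trans hz.1).ne (by rw [openSegment_eq_Ioo (hx.1.trans hz.1)]; exact ⟨hx.1, hz.1⟩)
    rwa [hfc, min_eq_left hfz.le] at this

end SignChange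

open Polynomial in
noncomputable def kCoeff (a : ℝ) (n : ℕ) : ℝ :=
  (ascPochhammer ℝ n).eval a * (ascPochhammer ℝ n).eval (1 - a) / (n.factorial : ℝ) ^ 2

open Polynomial in
noncomputable def eCoeff (a : ℝ) (n : ℕ) : ℝ :=
  (ascPochhammer ℝ n).eval (a - 1) * (ascPochhammer ℝ n).eval (1 - a) / (n.factorial : ℝ) ^ 2

noncomputable def phiCoeff (a : ℝ) (n : ℕ) : ℝ := kCoeff a n / (n + 1)

noncomputable def qCoeff (a : ℝ) (n : ℕ) : ℝ :=
  (2 + a * (1 - a)) * kCoeff a n / ((n + 1) * (n + 2))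

lemma Ka_eq_pseries (a r : ℝ) : Ka a r = π / 2 * pseries (kCoeff a) (r ^ 2) := by
  simp only [Ka, pseries, kCoeff, pow_mul]

lemma Ea_eq_pseries (a r : ℝ) : Ea a r = π / 2 * pseries (eCoeff a) (r ^ 2) := by
  simp only [Ea, pseries, eCoeff, pow_mul]

section Coefficients

variable {a : ℝ}

@[simp] lemma kCoeff_zero (a : ℝ) : kCoeff a 0 = 1 := by simp [kCoeff]

@[simp] lemma eCoeff_zero (a : ℝ) : eCoeff a 0 = 1 := by simp [eCoeff]

lemma kCoeff_succ (a : ℝ) (n : ℕ) :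
    kCoeff a (n + 1) = kCoeff a n * ((a + n) * (1 - a + n) / (n + 1) ^ 2) := by
  have := Nat.factorial_ne_zero n
  rw [kCoeff, kCoeff, ascPochhammer_succ_eval, ascPochhammer_succ_eval, Nat.factorial_succ]
  push_cast
  field_simp

lemma eCoeff_succ (a : ℝ) (n : ℕ) :
    eCoeff a (n + 1) = kCoeff a n * ((a - 1) * (1 - a + n) / (n + 1) ^ 2) := by
  have := Nat.factorial_ne_zero n
  have hleft : (ascPochhammer ℝ (n + 1)).eval (a - 1) = (a - 1) * (ascPochhammer ℝ n).eval a := by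
    rw [ascPochhammer_succ_left, Polynomial.eval_mul, Polynomial.eval_comp]
    simp
  rw [eCoeff, kCoeff, hleft, ascPochhammer_succ_eval (k := 1 - a), Nat.factorial_succ]
  push_cast
  field_simp

lemma kCoeff_one (a : ℝ) : kCoeff a 1 = a * (1 - a) := by
  simp [kCoeff_succ]

lemma eCoeff_succ_sub_kCoeff_succ_add_kCoeff (n : ℕ) :
    eCoeff a (n + 1) - kCoeff a (n + 1) + kCoeff a n = a * phiCoeff a n := by
  rw [eCoeff_succ, kCoeff_succ, phiCoeff]
  field_simp
  ring

lemma qCoeff_zero : qCoeff a 0 = derivCoeff (phiCoeff a) 0 + phiCoeff a 0 := by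
  norm_num [qCoeff, derivCoeff, phiCoeff, kCoeff_one]
  ring

lemma qCoeff_succ (n : ℕ) : qCoeff a (n + 1)
    = derivCoeff (phiCoeff a) (n + 1) - derivCoeff (phiCoeff a) n + phiCoeff a (n + 1) := by
  simp only [qCoeff, derivCoeff, phiCoeff, kCoeff_succ a (n + 1)]
  push_cast
  field_simp
  ring

lemma sum_range_derivCoeff_qCoeff (N : ℕ) :
    ∑ n ∈ Finset.range N, derivCoeff (qCoeff a) n = N * (N + 1) * kCoeff a (N + 1) / (N + 2) := by
  induction N with
  | zero => simp
  | succ N ih =>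
    rw [Finset.sum_range_succ, ih, derivCoeff, qCoeff, kCoeff_succ a (N + 1)]
    push_cast
    field_simp
    ring

variable (ha : 0 < a)
include ha

lemma kCoeff_eq_prod (N : ℕ) :
    kCoeff a N = a / (N + a) * ∏ j ∈ Finset.range N, (1 - a ^ 2 / (j + 1) ^ 2) := by
  induction N with
  | zero => simp [ha.ne']
  | succ N ih =>
    rw [Finset.prod_range_succ, kCoeff_succ, ih]
    have : (N : ℝ) + a ≠ 0 := by positivity
    have : (N : ℝ) + 1 + a ≠ 0 := by positivity
    push_cast
    field_simp
    ring

lemma tendsto_natCast_mul_kCoeff :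
    Tendsto (fun N : ℕ => N * kCoeff a N) atTop (𝓝 (sin (π * a) / π)) := by
  have h := (tendsto_natCast_div_add_atTop a).mul ((tendsto_euler_sin_prod a).div_const π)
  rw [one_mul] at h
  refine h.congr fun N => ?_
  rw [kCoeff_eq_prod ha]
  field_simp

lemma tendsto_pseries_derivCoeff_qCoeff :
    Tendsto (pseries (derivCoeff (qCoeff a))) (𝓝[<] 1) (𝓝 (sin (π * a) / π)) := by
  refine Real.tendsto_tsum_powerSeries_nhdsWithin_lt ?_
  have h := ((tendsto_natCast_mul_kCoeff ha).comp (tendsto_add_atTop_nat 1)).mul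
    (tendsto_natCast_div_add_atTop (2 : ℝ))
  rw [mul_one] at h
  refine h.congr fun N => ?_
  rw [sum_range_derivCoeff_qCoeff, Function.comp_apply]
  push_cast
  ring

variable (ha1 : a < 1)
include ha1

lemma kCoeff_pos (n : ℕ) : 0 < kCoeff a n :=
  div_pos (mul_pos (ascPochhammer_pos n a ha) (ascPochhammer_pos n _ (sub_pos.mpr ha1)))
    (by positivity)

lemma kCoeff_le_one (n : ℕ) : kCoeff a n ≤ 1 := by
  induction n with
  | zero => simp
  | succ n ih =>
    rw [kCoeff_succ]
    refine mul_le_one₀ ih (div_nonneg (by nlinarith) (by positivity)) ?_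
    rw [div_le_one (by positivity)]
    nlinarith

lemma abs_kCoeff_le_one (n : ℕ) : |kCoeff a n| ≤ 1 :=
  (abs_of_pos (kCoeff_pos ha ha1 n)).trans_le (kCoeff_le_one ha ha1 n)

lemma abs_eCoeff_le_one (n : ℕ) : |eCoeff a n| ≤ 1 := by
  cases n with
  | zero => simp
  | succ n =>
    rw [eCoeff_succ, abs_mul, abs_of_pos (kCoeff_pos ha ha1 n)]
    refine mul_le_one₀ (kCoeff_le_one ha ha1 n) (abs_nonneg _) ?_
    rw [abs_div, abs_mul, abs_of_neg (by linarith : a - 1 < 0), abs_of_pos (by positivity),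
      abs_of_pos (by positivity), div_le_one (by positivity)]
    nlinarith

lemma abs_phiCoeff_le_one (n : ℕ) : |phiCoeff a n| ≤ 1 := by
  have := kCoeff_pos ha ha1 n
  rw [phiCoeff, abs_of_pos (by positivity), div_le_one (by positivity)]
  linarith [kCoeff_le_one ha ha1 n]

lemma abs_derivCoeff_phiCoeff_le_one (n : ℕ) : |derivCoeff (phiCoeff a) n| ≤ 1 := by
  have := kCoeff_pos ha ha1 (n + 1)
  rw [derivCoeff, phiCoeff, abs_of_pos (by positivity), mul_div_assoc',
    div_le_one (by positivity)]
  push_cast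
  nlinarith [kCoeff_le_one ha ha1 (n + 1)]

lemma qCoeff_pos (n : ℕ) : 0 < qCoeff a n := by
  have := kCoeff_pos ha ha1 n
  have : 0 < a * (1 - a) := by nlinarith
  unfold qCoeff; positivity

lemma abs_qCoeff_le (n : ℕ) : |qCoeff a n| ≤ 2 := by
  rw [abs_of_pos (qCoeff_pos ha ha1 n), qCoeff, div_le_iff₀ (by positivity)]
  have : a * (1 - a) ≤ 1 := by nlinarith
  have : (2 + a * (1 - a)) * kCoeff a n ≤ 3 := by
    nlinarith [kCoeff_le_one ha ha1 n, kCoeff_pos ha ha1 n]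
  nlinarith [(n.cast_nonneg : (0 : ℝ) ≤ n)]

lemma derivCoeff_qCoeff_pos (n : ℕ) : 0 < derivCoeff (qCoeff a) n :=
  mul_pos (by positivity) (qCoeff_pos ha ha1 _)

lemma abs_derivCoeff_qCoeff_le (n : ℕ) : |derivCoeff (qCoeff a) n| ≤ 3 := by
  rw [abs_of_pos (derivCoeff_qCoeff_pos ha ha1 n), derivCoeff, qCoeff, mul_div_assoc',
    div_le_iff₀ (by positivity)]
  have : a * (1 - a) ≤ 1 := by nlinarith
  have : (2 + a * (1 - a)) * kCoeff a (n + 1) ≤ 3 := by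
    nlinarith [kCoeff_le_one ha ha1 (n + 1), kCoeff_pos ha ha1 (n + 1)]
  push_cast
  nlinarith [(n.cast_nonneg : (0 : ℝ) ≤ n)]

lemma sum_range_qCoeff (N : ℕ) :
    ∑ n ∈ Finset.range N, qCoeff a n
      = N * kCoeff a N * (N + 1 + a * (1 - a)) / (a * (1 - a) * (N + 1)) := by
  induction N with
  | zero => simp
  | succ N ih =>
    rw [Finset.sum_range_succ, ih, qCoeff, kCoeff_succ]
    have : 1 - a ≠ 0 := by linarith
    have := ha.ne'
    push_cast
    field_simp
    ring

lemma tendsto_pseries_qCoeff :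
    Tendsto (pseries (qCoeff a)) (𝓝[<] 1) (𝓝 (sin (π * a) / (π * (a * (1 - a))))) := by
  refine Real.tendsto_tsum_powerSeries_nhdsWithin_lt ?_
  have h := ((tendsto_natCast_mul_kCoeff ha).mul
    ((tendsto_one_div_add_atTop_nhds_zero_nat.const_mul (a * (1 - a))).const_add 1)).div_const
    (a * (1 - a))
  rw [mul_zero, add_zero, mul_one, div_div] at h
  refine h.congr fun N => ?_
  rw [sum_range_qCoeff ha ha1]
  have : a * (1 - a) ≠ 0 := by nlinarith
  field_simp

lemma pseries_eCoeff_sub_mul_pseries_kCoeff {x : ℝ} (hx : |x| < 1) :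
    pseries (eCoeff a) x - (1 - x) * pseries (kCoeff a) x = a * x * pseries (phiCoeff a) x := by
  have hE := (summable_pseries (abs_eCoeff_le_one ha ha1) hx).hasSum
  have hK := (summable_pseries (abs_kCoeff_le_one ha ha1) hx).hasSum
  have hΦ := (summable_pseries (abs_phiCoeff_le_one ha ha1) hx).hasSum
  have hshift := (hasSum_nat_add_iff' 1).mpr (hE.sub hK)
  simp only [Finset.range_one, Finset.sum_singleton, eCoeff_zero, kCoeff_zero, sub_self] at hshift
  have hsum : HasSum (fun n => eCoeff a (n + 1) * x ^ (n + 1) - kCoeff a (n + 1) * x ^ (n + 1)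
      + x * (kCoeff a n * x ^ n)) (a * x * pseries (phiCoeff a) x) := by
    refine (hΦ.mul_left (a * x)).congr_fun fun n => ?_
    rw [mul_mul_mul_comm, ← eCoeff_succ_sub_kCoeff_succ_add_kCoeff]
    ring
  have := (hshift.add (hK.mul_left x)).unique hsum
  rw [pseries, pseries]
  linarith

lemma pseries_qCoeff {x : ℝ} (hx : |x| < 1) :
    pseries (qCoeff a) x
      = (1 - x) * pseries (derivCoeff (phiCoeff a)) x + pseries (phiCoeff a) x := by
  have hQ := (summable_pseries (abs_qCoeff_le ha ha1) hx).hasSum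
  have hΦ' := (summable_pseries (abs_derivCoeff_phiCoeff_le_one ha ha1) hx).hasSum
  have hΦ := (summable_pseries (abs_phiCoeff_le_one ha ha1) hx).hasSum
  have hshift := (hasSum_nat_add_iff' 1).mpr ((hΦ'.add hΦ).sub hQ)
  simp only [Finset.range_one, Finset.sum_singleton, qCoeff_zero, pow_zero] at hshift
  have hsum : HasSum (fun n => derivCoeff (phiCoeff a) (n + 1) * x ^ (n + 1)
      + phiCoeff a (n + 1) * x ^ (n + 1) - qCoeff a (n + 1) * x ^ (n + 1))
      (x * pseries (derivCoeff (phiCoeff a)) x) := by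
    refine (hΦ'.mul_left x).congr_fun fun n => ?_
    rw [qCoeff_succ]
    ring
  have := hshift.unique hsum
  rw [pseries, pseries, pseries] at *
  linarith

end Coefficients

noncomputable def signFactor (a lam x : ℝ) : ℝ :=
  1 - lam * (1 - x) - π * (a * (1 - a)) / sin (π * a) * pseries (qCoeff a) x

section SignFactor

variable {a lam : ℝ} (ha : 0 < a) (ha1 : a < 1)
include ha ha1

lemma sin_pi_mul_pos : 0 < sin (π * a) :=
  sin_pos_of_pos_of_lt_pi (by positivity) (by nlinarith [pi_pos])

lemma signFactor_zero :
    signFactor a lam 0 = 1 - π * a * (1 - a) / sin (π * a)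
      - π * a ^ 2 * (1 - a) ^ 2 / (2 * sin (π * a)) - lam := by
  have := (sin_pi_mul_pos ha ha1).ne'
  rw [signFactor, pseries_zero, qCoeff, kCoeff_zero]
  field_simp
  ring

lemma pos_of_signFactor_zero_neg (h : signFactor a lam 0 < 0) : 0 < lam := by
  have hs := sin_pi_mul_pos ha ha1
  have hβ : 0 < a * (1 - a) := by nlinarith
  have hq := (strictMonoOn_pseries (abs_qCoeff_le ha ha1) (fun n => (qCoeff_pos ha ha1 n).le)
    (qCoeff_pos ha ha1 1)).lt_of_tendsto_nhdsLT (tendsto_pseries_qCoeff ha ha1)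
    (left_mem_Ico.2 one_pos)
  rw [lt_div_iff₀ (by positivity)] at hq
  rw [signFactor] at h
  have : π * (a * (1 - a)) / sin (π * a) * pseries (qCoeff a) 0 < 1 := by
    rw [div_mul_eq_mul_div, div_lt_one hs]; linarith
  linarith

lemma hasDerivAt_signFactor {x : ℝ} (hx : |x| < 1) :
    HasDerivAt (signFactor a lam)
      (lam - π * (a * (1 - a)) / sin (π * a) * pseries (derivCoeff (qCoeff a)) x) x := by
  have h := ((hasDerivAt_id' x).const_sub 1).const_mul lam |>.const_sub 1 |>.sub
    ((hasDerivAt_pseries (abs_qCoeff_le ha ha1) hx).const_mul (π * (a * (1 - a)) / sin (π * a)))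
  exact h.congr_deriv (by ring)

lemma tendsto_signFactor : Tendsto (signFactor a lam) (𝓝[<] 1) (𝓝 0) := by
  have hlin : Tendsto (fun x : ℝ => 1 - lam * (1 - x)) (𝓝[<] 1) (𝓝 1) := by
    have h := (by fun_prop : Continuous fun x : ℝ => 1 - lam * (1 - x)).tendsto 1
    simpa using h.mono_left (nhdsWithin_le_nhds (s := Iio 1))
  have h := hlin.sub ((tendsto_pseries_qCoeff ha ha1).const_mul (π * (a * (1 - a)) / sin (π * a)))
  have hK : π * (a * (1 - a)) / sin (π * a) * (sin (π * a) / (π * (a * (1 - a)))) = 1 := by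
    have := (sin_pi_mul_pos ha ha1).ne'
    have : 1 - a ≠ 0 := by linarith
    field_simp
  rwa [hK, sub_self] at h

lemma strictConcaveOn_signFactor : StrictConcaveOn ℝ (Ico 0 1) (signFactor a lam) := by
  have hK : 0 < π * (a * (1 - a)) / sin (π * a) := by
    have := sin_pi_mul_pos ha ha1
    have : 0 < a * (1 - a) := by nlinarith
    positivity
  have hderiv {x : ℝ} (hx : x ∈ Ico (0 : ℝ) 1) :=
    hasDerivAt_signFactor (lam := lam) ha ha1 (abs_lt_one_of_mem_Ico hx)
  refine StrictAntiOn.strictConcaveOn_of_deriv (convex_Ico 0 1)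
    (fun x hx => (hderiv hx).continuousAt.continuousWithinAt) ?_
  rw [interior_Ico]
  intro x hx y hy hxy
  rw [(hderiv (Ioo_subset_Ico_self hx)).deriv, (hderiv (Ioo_subset_Ico_self hy)).deriv]
  have := strictMonoOn_pseries (abs_derivCoeff_qCoeff_le ha ha1)
    (fun n => (derivCoeff_qCoeff_pos ha ha1 n).le) (derivCoeff_qCoeff_pos ha ha1 1)
    (Ioo_subset_Ico_self hx) (Ioo_subset_Ico_self hy) hxy
  nlinarith

lemma exists_sign_change_signFactor (h0 : signFactor a lam 0 < 0) (hlam : lam < a * (1 - a)) :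
    ∃ t₀ ∈ Ioo (0 : ℝ) 1, (∀ t ∈ Ioo 0 t₀, signFactor a lam t < 0) ∧
      ∀ t ∈ Ioo t₀ 1, 0 < signFactor a lam t := by
  have hderiv : ∀ᶠ x in 𝓝[<] (1 : ℝ), HasDerivAt (signFactor a lam)
      (lam - π * (a * (1 - a)) / sin (π * a) * pseries (derivCoeff (qCoeff a)) x) x := by
    filter_upwards [Ioo_mem_nhdsLT (show (-1 : ℝ) < 1 by norm_num)] with x hx
    exact hasDerivAt_signFactor ha ha1 (abs_lt.mpr hx)
  have hderiv_neg : ∀ᶠ x in 𝓝[<] (1 : ℝ),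
      lam - π * (a * (1 - a)) / sin (π * a) * pseries (derivCoeff (qCoeff a)) x < 0 := by
    have h := (tendsto_pseries_derivCoeff_qCoeff ha).const_mul (π * (a * (1 - a)) / sin (π * a))
      |>.const_sub lam
    refine h.eventually_lt_const ?_
    have := (sin_pi_mul_pos ha ha1).ne'
    field_simp
    linarith
  exact (strictConcaveOn_signFactor ha ha1).exists_sign_change one_pos
    (fun x hx => (hasDerivAt_signFactor ha ha1 (abs_lt_one_of_mem_Ico hx)).continuousAt
      |>.continuousWithinAt) h0
    (eventually_pos_nhdsLT_of_hasDerivAt_neg hderiv hderiv_neg (tendsto_signFactor ha ha1))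

end SignFactor

noncomputable def gReduced (a lam x : ℝ) : ℝ :=
  log (1 - x) / 2
    + (sin (π * a) - π * (a * (1 - a)) * pseries (phiCoeff a) x) / (2 * lam * (1 - x) * sin (π * a))

noncomputable def gLambda (a lam r : ℝ) : ℝ :=
  1 / 2 - log (exp (ramanujanR a / 2) / √(1 - r ^ 2))
    + (r ^ 2 * sin (π * a) - 2 * (1 - a) * (Ea a r - √(1 - r ^ 2) ^ 2 * Ka a r))
      / (2 * lam * r ^ 2 * √(1 - r ^ 2) ^ 2 * sin (π * a))

section GReduced

variable {a lam : ℝ} (ha : 0 < a) (ha1 : a < 1)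
include ha ha1

lemma gLambda_eq {r : ℝ} (hr : r ∈ Ioo 0 1) :
    gLambda a lam r = 1 / 2 - ramanujanR a / 2 + gReduced a lam (r ^ 2) := by
  have h1r : 0 < 1 - r ^ 2 := by nlinarith [hr.1, hr.2]
  have hx : |r ^ 2| < 1 := by rw [abs_of_pos (by nlinarith [hr.1])]; linarith
  have hEK :
      Ea a r - (1 - r ^ 2) * Ka a r = π / 2 * (a * r ^ 2 * pseries (phiCoeff a) (r ^ 2)) := by
    rw [Ea_eq_pseries, Ka_eq_pseries, ← pseries_eCoeff_sub_mul_pseries_kCoeff ha ha1 hx]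
    ring
  have := hr.1.ne'
  have := (sin_pi_mul_pos ha ha1).ne'
  rw [gLambda, gReduced, sq_sqrt h1r.le, hEK, log_div (exp_ne_zero _) (sqrt_pos.2 h1r).ne',
    log_exp, log_sqrt h1r.le]
  field_simp
  ring

lemma hasDerivAt_gReduced (hlam : lam ≠ 0) {x : ℝ} (hx : |x| < 1) :
    HasDerivAt (gReduced a lam) (signFactor a lam x / (2 * lam * (1 - x) ^ 2)) x := by
  have hs := (sin_pi_mul_pos ha ha1).ne'
  have h1x : 1 - x ≠ 0 := by linarith [(abs_lt.mp hx).2]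
  have hlog := ((hasDerivAt_id' x).const_sub 1).log h1x |>.div_const 2
  have hfrac := ((hasDerivAt_pseries (abs_phiCoeff_le_one ha ha1) hx).const_mul (π * (a * (1 - a)))
    |>.const_sub (sin (π * a))).div (((hasDerivAt_id' x).const_sub 1).const_mul (2 * lam)
    |>.mul_const (sin (π * a))) (by positivity)
  refine (hlog.add hfrac).congr_deriv ?_
  rw [signFactor, pseries_qCoeff ha ha1 hx]
  field_simp
  ring

end GReduced

section Monotonicity

variable {a lam t₀ : ℝ} (ha : 0 < a) (ha1 : a < 1) (hlam : 0 < lam)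
include ha ha1 hlam

lemma strictAntiOn_gReduced (ht₀ : t₀ ≤ 1) (hneg : ∀ t ∈ Ioo 0 t₀, signFactor a lam t < 0) :
    StrictAntiOn (gReduced a lam) (Ioo 0 t₀) := by
  refine strictAntiOn_of_hasDerivAt_neg (convex_Ioo 0 t₀) (fun x hx => hasDerivAt_gReduced ha ha1
    hlam.ne' (abs_lt_one_of_mem_Ico ⟨hx.1.le, hx.2.trans_le ht₀⟩)) fun x hx => ?_
  have := sub_pos.2 (hx.2.trans_le ht₀)
  exact div_neg_of_neg_of_pos (hneg x hx) (by positivity)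

lemma strictMonoOn_gReduced (ht₀ : 0 ≤ t₀) (hpos : ∀ t ∈ Ioo t₀ 1, 0 < signFactor a lam t) :
    StrictMonoOn (gReduced a lam) (Ioo t₀ 1) := by
  refine strictMonoOn_of_hasDerivAt_pos (convex_Ioo t₀ 1) (fun x hx => hasDerivAt_gReduced ha ha1
    hlam.ne' (abs_lt_one_of_mem_Ico ⟨ht₀.trans hx.1.le, hx.2⟩)) fun x hx => ?_
  have := sub_pos.2 hx.2
  exact div_pos (hpos x hx) (by positivity)

lemma strictAntiOn_gLambda (ht₀ : t₀ ∈ Ioo 0 1) (hneg : ∀ t ∈ Ioo 0 t₀, signFactor a lam t < 0) :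
    StrictAntiOn (gLambda a lam) (Ioo 0 √t₀) := by
  have hsqrt : √t₀ < 1 := (sqrt_lt' one_pos).2 (by simpa using ht₀.2)
  have hsq : MapsTo (· ^ 2) (Ioo 0 √t₀) (Ioo 0 t₀) := fun r hr =>
    ⟨pow_pos hr.1 2, (lt_sqrt hr.1.le).1 hr.2⟩
  refine (((strictAntiOn_gReduced ha ha1 hlam ht₀.2.le hneg).comp_strictMonoOn
    ((pow_left_strictMonoOn₀ two_ne_zero).mono fun r hr => hr.1.le) hsq).const_add
    (1 / 2 - ramanujanR a / 2)).congr fun r hr => ?_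
  exact (gLambda_eq ha ha1 ⟨hr.1, hr.2.trans hsqrt⟩).symm

lemma strictMonoOn_gLambda (ht₀ : t₀ ∈ Ioo 0 1) (hpos : ∀ t ∈ Ioo t₀ 1, 0 < signFactor a lam t) :
    StrictMonoOn (gLambda a lam) (Ioo √t₀ 1) := by
  have hsq : MapsTo (· ^ 2) (Ioo √t₀ 1) (Ioo t₀ 1) := fun r hr =>
    ⟨(sqrt_lt' (hr.1.trans_le' (sqrt_nonneg _))).1 hr.1, by nlinarith [hr.2, sqrt_nonneg t₀, hr.1]⟩
  refine (((strictMonoOn_gReduced ha ha1 hlam ht₀.1.le hpos).comp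
    ((pow_left_strictMonoOn₀ two_ne_zero).mono fun r hr => (sqrt_nonneg _).trans hr.1.le)
    hsq).const_add (1 / 2 - ramanujanR a / 2)).congr fun r hr => ?_
  exact (gLambda_eq ha ha1 ⟨(sqrt_pos.2 ht₀.1).trans hr.1, hr.2⟩).symm

end Monotonicity

theorem stmt15 (a : ℝ) (ha : a ∈ Set.Ioc (0 : ℝ) (1/2)) (lam : ℝ)
    (h2 : 1 - Real.pi * a * (1 - a) / Real.sin (Real.pi * a)
      - Real.pi * a^2 * (1 - a)^2 / (2 * Real.sin (Real.pi * a)) < lam)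
    (hb : lam < a * (1 - a)) :
    ∃ r₀ ∈ Set.Ioo (0 : ℝ) 1,
      StrictAntiOn (fun r : ℝ =>
        1/2 - Real.log (Real.exp (ramanujanR a / 2) / Real.sqrt (1 - r^2))
          + (r^2 * Real.sin (Real.pi * a)
              - 2 * (1 - a) * (Ea a r - (Real.sqrt (1 - r^2))^2 * Ka a r))
            / (2 * lam * r^2 * (Real.sqrt (1 - r^2))^2 * Real.sin (Real.pi * a)))
        (Set.Ioo 0 r₀) ∧
      StrictMonoOn (fun r : ℝ =>
        1/2 - Real.log (Real.exp (ramanujanR a / 2) / Real.sqrt (1 - r^2))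
          + (r^2 * Real.sin (Real.pi * a)
              - 2 * (1 - a) * (Ea a r - (Real.sqrt (1 - r^2))^2 * Ka a r))
            / (2 * lam * r^2 * (Real.sqrt (1 - r^2))^2 * Real.sin (Real.pi * a)))
        (Set.Ioo r₀ 1) := by
  obtain ⟨ha0, ha2⟩ := ha
  have ha1 : a < 1 := by linarith
  have h0 : signFactor a lam 0 < 0 := by rw [signFactor_zero ha0 ha1]; linarith
  have hlam := pos_of_signFactor_zero_neg ha0 ha1 h0
  obtain ⟨t₀, ht₀, hneg, hpos⟩ := exists_sign_change_signFactor ha0 ha1 h0 hb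
  exact ⟨√t₀, ⟨sqrt_pos.2 ht₀.1, (sqrt_lt' one_pos).2 (by simpa using ht₀.2)⟩,
    strictAntiOn_gLambda ha0 ha1 hlam ht₀ hneg, strictMonoOn_gLambda ha0 ha1 hlam ht₀ hpos⟩
end

section
/- Fix a ∈ (0, 1/2] and let λ₁ = (sin(πa) − π·a(1−a)) / (sin(πa)·(R(a) − 1)). For λ > 0 define, for r ∈ (0,1), G_λ(r) = 1/2 − log(e^{R(a)/2}/r') + [r²·sin(πa) − 2(1−a)·(E_a(r) − r'²·K_a(r))] / (2λ·r²·r'²·sin(πa)), where r' = √(1−r²). Then lim_{r→0⁺} G_λ(r) exists and equals (R(a) − 1)/(2λ)·(λ₁ − λ); in particular the limit is positive if 0 < λ < λ₁, zero if λ = λ₁, and negative if λ > λ₁. -/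
open Real Set Filter Topology

/-!
Since `log Γ` is convex, `ψ` is increasing on `(0, ∞)`, so for `a ≤ 1/2` we get
`R(a) ≥ -2γ - ψ(1/2) - ψ(1) = 2 log 2 > 1`.

With `t = r²`, both `E_a` and `K_a` are power series in `t` with coefficients bounded by `1` and
constant term `1`, so `(E_a(r) - r'² K_a(r)) / r²` tends to `π/2` times the sum of the linear
coefficient of `E_a`, minus that of `K_a`, plus the constant term of `K_a`, which is `π a / 2`.
Substituting this limit and `r' → 1` into `G_λ` gives the value of the limit.
-/

open scoped Nat

lemma differentiableAt_Gamma_of_pos {x : ℝ} (hx : 0 < x) : DifferentiableAt ℝ Gamma x :=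
  differentiableAt_Gamma fun m ↦ ((neg_nonpos.mpr m.cast_nonneg).trans_lt hx).ne'

lemma digamma_eq_deriv_log_Gamma {x : ℝ} (hx : 0 < x) :
    digamma x = deriv (log ∘ Gamma) x := by
  rw [Function.comp_def, deriv.log (differentiableAt_Gamma_of_pos hx) (Gamma_pos_of_pos hx).ne',
    digamma]

lemma digamma_monotoneOn : MonotoneOn digamma (Ioi 0) := by
  intro x hx y hy hxy
  rw [digamma_eq_deriv_log_Gamma hx, digamma_eq_deriv_log_Gamma hy]
  refine convexOn_log_Gamma.monotoneOn_deriv (fun z hz ↦ ?_) hx hy hxy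
  exact (differentiableAt_Gamma_of_pos hz).log (Gamma_pos_of_pos hz).ne'

lemma digamma_one : digamma 1 = -eulerMascheroniConstant := by
  rw [digamma, hasDerivAt_Gamma_one.deriv, Gamma_one, div_one]

lemma digamma_one_half : digamma (1 / 2) = -eulerMascheroniConstant - 2 * log 2 := by
  rw [digamma, hasDerivAt_Gamma_one_half.deriv, Gamma_one_half_eq]
  field_simp
  ring

lemma one_lt_ramanujanR {a : ℝ} (ha : a ∈ Ioc 0 (1 / 2)) : 1 < ramanujanR a := by
  have h_half : digamma a ≤ digamma (1 / 2) :=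
    digamma_monotoneOn ha.1 (by norm_num : (0 : ℝ) < 1 / 2) ha.2
  have h_one : digamma (1 - a) ≤ digamma 1 :=
    digamma_monotoneOn (show 0 < 1 - a by linarith [ha.2]) (mem_Ioi.2 one_pos)
      (by linarith [ha.1])
  rw [digamma_one_half] at h_half
  rw [digamma_one] at h_one
  rw [ramanujanR]
  linarith [log_two_gt_d9]

section PowerSeries

variable {u : ℕ → ℝ} {M : ℝ}

lemma summable_mul_pow_of_abs_le (hu : ∀ n, |u n| ≤ M) {t : ℝ} (ht : |t| < 1) :
    Summable fun n ↦ u n * t ^ n := by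
  refine Summable.of_norm_bounded
    ((summable_geometric_of_lt_one (abs_nonneg t) ht).mul_left M) fun n ↦ ?_
  rw [norm_mul, norm_pow, norm_eq_abs, norm_eq_abs]
  exact mul_le_mul_of_nonneg_right (hu n) (by positivity)

lemma tsum_mul_pow_eq_add {t : ℝ} (hs : Summable fun n ↦ u n * t ^ n) :
    ∑' n, u n * t ^ n = u 0 + t * ∑' n, u (n + 1) * t ^ n := by
  rw [hs.tsum_eq_zero_add, ← tsum_mul_left, pow_zero, mul_one]
  congr 2 with n
  ring

lemma tendsto_tsum_mul_pow_nhds_zero (hu : ∀ n, |u n| ≤ M) :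
    Tendsto (fun t ↦ ∑' n, u n * t ^ n) (𝓝 0) (𝓝 (u 0)) := by
  have h_bound : ∀ᶠ t : ℝ in 𝓝 0, ∀ n, ‖u n * t ^ n‖ ≤ M * (1 / 2) ^ n := by
    filter_upwards [Metric.closedBall_mem_nhds (0 : ℝ) (by norm_num : (0 : ℝ) < 1 / 2)]
      with t ht n
    rw [Metric.mem_closedBall, dist_zero_right, norm_eq_abs] at ht
    rw [norm_mul, norm_pow, norm_eq_abs, norm_eq_abs]
    exact mul_le_mul (hu n) (pow_le_pow_left₀ (abs_nonneg t) ht n) (by positivity)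
      ((abs_nonneg _).trans (hu n))
  have h_term : ∀ n, Tendsto (fun t : ℝ ↦ u n * t ^ n) (𝓝 0) (𝓝 (u n * 0 ^ n)) := fun n ↦
    ((continuous_pow n).const_smul (u n)).tendsto 0
  have h := tendsto_tsum_of_dominated_convergence
    (summable_geometric_two.mul_left M) h_term h_bound
  rwa [tsum_eq_single 0 fun n hn ↦ by simp [hn], pow_zero, mul_one] at h

lemma tendsto_slope_tsum_mul_pow_nhds_zero (hu : ∀ n, |u n| ≤ M) :
    Tendsto (fun t ↦ (∑' n, u n * t ^ n - u 0) / t) (𝓝[≠] 0) (𝓝 (u 1)) := by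
  refine ((tendsto_tsum_mul_pow_nhds_zero fun n ↦ hu (n + 1)).mono_left
    nhdsWithin_le_nhds).congr' ?_
  filter_upwards [self_mem_nhdsWithin,
    nhdsWithin_le_nhds (Metric.ball_mem_nhds (0 : ℝ) one_pos)] with t ht0 ht1
  rw [mem_ball_zero_iff, norm_eq_abs] at ht1
  rw [tsum_mul_pow_eq_add (summable_mul_pow_of_abs_le hu ht1), add_sub_cancel_left,
    mul_div_cancel_left₀ _ ht0]

end PowerSeries

section EllipticIntegrals

noncomputable def hypergeomCoeff (b c : ℝ) (n : ℕ) : ℝ :=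
  (ascPochhammer ℝ n).eval b * (ascPochhammer ℝ n).eval c / (n ! : ℝ) ^ 2

lemma abs_ascPochhammer_eval_le_factorial {x : ℝ} (hx : |x| ≤ 1) (n : ℕ) :
    |(ascPochhammer ℝ n).eval x| ≤ n ! := by
  induction n with
  | zero => simp
  | succ n ih =>
    have hxn : |x + n| ≤ n + 1 := (abs_add_le _ _).trans (by rw [Nat.abs_cast]; linarith)
    rw [ascPochhammer_succ_eval, abs_mul, Nat.factorial_succ, Nat.cast_mul, mul_comm _ (n ! : ℝ)]
    push_cast
    exact mul_le_mul ih hxn (abs_nonneg _) (by positivity)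

lemma abs_hypergeomCoeff_le_one {b c : ℝ} (hb : |b| ≤ 1) (hc : |c| ≤ 1) (n : ℕ) :
    |hypergeomCoeff b c n| ≤ 1 := by
  rw [hypergeomCoeff, abs_div, abs_mul, abs_of_pos (by positivity : (0 : ℝ) < (n ! : ℝ) ^ 2),
    div_le_one (by positivity), sq]
  exact mul_le_mul (abs_ascPochhammer_eval_le_factorial hb n)
    (abs_ascPochhammer_eval_le_factorial hc n) (abs_nonneg _) (by positivity)

lemma Ka_eq_tsum (a r : ℝ) :
    Ka a r = π / 2 * ∑' n, hypergeomCoeff a (1 - a) n * (r ^ 2) ^ n := by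
  simp only [Ka, hypergeomCoeff, pow_mul]

lemma Ea_eq_tsum (a r : ℝ) :
    Ea a r = π / 2 * ∑' n, hypergeomCoeff (a - 1) (1 - a) n * (r ^ 2) ^ n := by
  simp only [Ea, hypergeomCoeff, pow_mul]

lemma tendsto_Ea_sub_mul_Ka_div_sq {a : ℝ} (ha : a ∈ Icc 0 1) :
    Tendsto (fun r ↦ (Ea a r - (1 - r ^ 2) * Ka a r) / r ^ 2) (𝓝[>] 0) (𝓝 (π * a / 2)) := by
  set c := hypergeomCoeff a (1 - a)
  set d := hypergeomCoeff (a - 1) (1 - a)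
  have hc : ∀ n, |c n| ≤ 1 := abs_hypergeomCoeff_le_one
    (abs_le.2 ⟨by linarith [ha.1], ha.2⟩) (abs_le.2 ⟨by linarith [ha.2], by linarith [ha.1]⟩)
  have hd : ∀ n, |d n| ≤ 1 := abs_hypergeomCoeff_le_one
    (abs_le.2 ⟨by linarith [ha.1], by linarith [ha.2]⟩)
    (abs_le.2 ⟨by linarith [ha.2], by linarith [ha.1]⟩)
  have hc0 : c 0 = 1 := by simp [c, hypergeomCoeff]
  have hd0 : d 0 = 1 := by simp [d, hypergeomCoeff]
  have h_coeff : π / 2 * (d 1 - c 1 + c 0) = π * a / 2 := by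
    simp only [c, d, hypergeomCoeff, ascPochhammer_one, Polynomial.eval_X, Nat.factorial_one,
      ascPochhammer_zero, Polynomial.eval_one, Nat.factorial_zero]
    ring
  set P := fun t : ℝ ↦ ∑' n, d n * t ^ n
  set Q := fun t : ℝ ↦ ∑' n, c n * t ^ n
  -- as `d 0 = c 0 = 1`, `(P - (1 - t) Q) / t = (P - 1) / t - (Q - 1) / t + Q`
  have h_slope : Tendsto (fun t ↦ (π / 2 * P t - (1 - t) * (π / 2 * Q t)) / t) (𝓝[≠] 0)
      (𝓝 (π * a / 2)) := by
    rw [← h_coeff]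
    refine (((tendsto_slope_tsum_mul_pow_nhds_zero hd).sub
      (tendsto_slope_tsum_mul_pow_nhds_zero hc)).add
      ((tendsto_tsum_mul_pow_nhds_zero hc).mono_left nhdsWithin_le_nhds)).const_mul (π / 2)
      |>.congr' ?_
    filter_upwards [self_mem_nhdsWithin] with t (ht : t ≠ 0)
    simp only [P, Q, hc0, hd0]
    generalize ∑' n, d n * t ^ n = p
    generalize ∑' n, c n * t ^ n = q
    field_simp
    ring
  have h_sq : Tendsto (fun r : ℝ ↦ r ^ 2) (𝓝[>] 0) (𝓝[≠] 0) := by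
    refine tendsto_nhdsWithin_iff.2 ⟨?_, ?_⟩
    · simpa using ((continuous_pow 2).tendsto (0 : ℝ)).mono_left nhdsWithin_le_nhds
    · filter_upwards [self_mem_nhdsWithin] with r hr
      exact pow_ne_zero 2 (ne_of_gt hr)
  simpa only [Function.comp_def, Ka_eq_tsum, Ea_eq_tsum] using h_slope.comp h_sq

end EllipticIntegrals

theorem stmt16 (a : ℝ) (ha : a ∈ Set.Ioc (0 : ℝ) (1/2)) (lam : ℝ) (hlam : 0 < lam)
    (lam1 : ℝ)
    (hlam1 : lam1 = (Real.sin (Real.pi * a) - Real.pi * a * (1 - a)) /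
      (Real.sin (Real.pi * a) * (ramanujanR a - 1))) :
    Filter.Tendsto (fun r : ℝ =>
      1/2 - Real.log (Real.exp (ramanujanR a / 2) / Real.sqrt (1 - r^2))
        + (r^2 * Real.sin (Real.pi * a)
            - 2 * (1 - a) * (Ea a r - (Real.sqrt (1 - r^2))^2 * Ka a r))
          / (2 * lam * r^2 * (Real.sqrt (1 - r^2))^2 * Real.sin (Real.pi * a)))
      (nhdsWithin 0 (Set.Ioi 0))
      (nhds ((ramanujanR a - 1) / (2 * lam) * (lam1 - lam))) ∧
    (lam < lam1 → 0 < (ramanujanR a - 1) / (2 * lam) * (lam1 - lam)) ∧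
    (lam = lam1 → (ramanujanR a - 1) / (2 * lam) * (lam1 - lam) = 0) ∧
    (lam1 < lam → (ramanujanR a - 1) / (2 * lam) * (lam1 - lam) < 0) := by
  have hR : 1 < ramanujanR a := one_lt_ramanujanR ha
  have hsin : 0 < sin (π * a) :=
    sin_pos_of_pos_of_lt_pi (mul_pos pi_pos ha.1) (by nlinarith [pi_pos, ha.2])
  have hcoef : 0 < (ramanujanR a - 1) / (2 * lam) := div_pos (by linarith) (by positivity)
  have hq := tendsto_Ea_sub_mul_Ka_div_sq ⟨ha.1.le, by linarith [ha.2]⟩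
  have hs : Tendsto (fun r : ℝ ↦ √(1 - r ^ 2)) (𝓝[>] 0) (𝓝 1) := by
    simpa using ((by fun_prop : Continuous fun r : ℝ ↦ √(1 - r ^ 2)).tendsto 0).mono_left
      nhdsWithin_le_nhds
  have hlim : Tendsto (fun r ↦ 1 / 2 - log (exp (ramanujanR a / 2) / √(1 - r ^ 2))
      + (sin (π * a) - 2 * (1 - a) * ((Ea a r - (1 - r ^ 2) * Ka a r) / r ^ 2))
        / (2 * lam * √(1 - r ^ 2) ^ 2 * sin (π * a))) (𝓝[>] 0)
      (𝓝 (1 / 2 - log (exp (ramanujanR a / 2) / 1)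
        + (sin (π * a) - 2 * (1 - a) * (π * a / 2)) / (2 * lam * 1 ^ 2 * sin (π * a)))) :=
    (tendsto_const_nhds.sub ((tendsto_const_nhds.div hs one_ne_zero).log (by positivity))).add
      ((tendsto_const_nhds.sub (tendsto_const_nhds.mul hq)).div
        ((tendsto_const_nhds.mul (hs.pow 2)).mul tendsto_const_nhds) (by positivity))
  have hval : 1 / 2 - log (exp (ramanujanR a / 2) / 1)
      + (sin (π * a) - 2 * (1 - a) * (π * a / 2)) / (2 * lam * 1 ^ 2 * sin (π * a))
      = (ramanujanR a - 1) / (2 * lam) * (lam1 - lam) := by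
    have hR1 : ramanujanR a - 1 ≠ 0 := by linarith
    rw [div_one, log_exp, hlam1]
    field_simp
    ring
  refine ⟨?_, fun h ↦ mul_pos hcoef (by linarith), fun h ↦ by rw [h, sub_self, mul_zero],
    fun h ↦ mul_neg_of_pos_of_neg hcoef (by linarith)⟩
  rw [← hval]
  refine hlim.congr' ?_
  filter_upwards [Ioo_mem_nhdsGT one_pos] with r ⟨hr0, hr1⟩
  rw [sq_sqrt (by nlinarith)]
  field_simp
end
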